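/- The full algebra M_n(F) of n×n matrices over a field F does not satisfy any multilinear polynomial identity of degree less than 2n; in particular s_{2n-1} is not an identity of M_n(F). -/

import Mathlib

/-!
Take the staircase of matrix units `e₀₀, e₀₁, e₁₁, e₁₂, e₂₂, …`, the `k`-th one being
`e_{⌊k/2⌋, ⌊(k+1)/2⌋}`; the first `m` of them fit in `M_n` exactly when `m < 2n`. A product of
matrix units is nonzero only if the column of each factor is the row of the next, and along the
staircase this forces every factor to be a strictly later step than the one before it, so the
staircase taken in its own order is the only nonzero monomial. Substituting it along `σ₀⁻¹`, where
`c σ₀ ≠ 0`, kills every term of `∑ c σ • x_{σ 0} ⋯ x_{σ (m-1)}` except `c σ₀ • e_{0, ⌊m/2⌋}`.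
-/

open Matrix

/-- The standard polynomial `s_d` evaluated at `x : Fin d → R`. -/
noncomputable def stdPoly {R : Type*} [Ring R] (d : ℕ) (x : Fin d → R) : R :=
  ∑ σ : Equiv.Perm (Fin d), ((Equiv.Perm.sign σ : ℤˣ) : ℤ) • (List.ofFn fun i => x (σ i)).prod

theorem Equiv.Perm.eq_one_of_staircase_chain {m : ℕ} (τ : Equiv.Perm (Fin (m + 1)))
    (h : ∀ k : Fin m, ((τ k.castSucc : ℕ) + 1) / 2 = (τ k.succ : ℕ) / 2) : τ = 1 := by
  have hmono : StrictMono τ := Fin.strictMono_iff_lt_succ.2 fun k => by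
    have hne : (τ k.castSucc : ℕ) ≠ τ k.succ :=
      Fin.val_ne_of_ne (τ.injective.ne Fin.castSucc_lt_succ.ne)
    have hk := h k
    rw [Fin.lt_def]
    omega
  exact Equiv.ext fun _ => hmono.apply_eq

namespace Matrix

variable {R : Type*} [Semiring R] {n : ℕ}

theorem single_one_mul_single_one {ι : Type*} [Fintype ι] [DecidableEq ι] (i j k l : ι) :
    single i j (1 : R) * single k l 1 = if j = k then single i l 1 else 0 := by
  split_ifs with h
  · rw [h, single_mul_single_same, one_mul]
  · exact single_mul_single_of_ne (h := h) ..

theorem list_prod_ofFn_single_one {ι : Type*} [Fintype ι] [DecidableEq ι] :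
    ∀ (m : ℕ) (a b : Fin (m + 1) → ι),
      (List.ofFn fun k => single (a k) (b k) (1 : R)).prod =
        if ∀ k : Fin m, b k.castSucc = a k.succ then single (a 0) (b (Fin.last m)) 1 else 0
  | 0, a, b => by simp
  | m + 1, a, b => by
    rw [List.ofFn_succ, List.prod_cons,
      list_prod_ofFn_single_one m (fun k => a k.succ) (fun k => b k.succ)]
    have hsplit : (∀ k : Fin (m + 1), b k.castSucc = a k.succ) ↔
        b 0 = a 1 ∧ ∀ k : Fin m, b k.castSucc.succ = a k.succ.succ := by
      simp only [Fin.forall_fin_succ, Fin.succ_castSucc]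
      rfl
    simp only [hsplit]
    by_cases hrest : ∀ k : Fin m, b k.castSucc.succ = a k.succ.succ
    · simp only [hrest, implies_true, and_true, if_true, single_one_mul_single_one]
      rfl
    · simp only [hrest, and_false, if_false, mul_zero]

def staircase {m : ℕ} (hm : m < 2 * n) (k : Fin m) : Matrix (Fin n) (Fin n) R :=
  single ⟨k / 2, by omega⟩ ⟨(k + 1) / 2, by omega⟩ 1

theorem list_prod_ofFn_staircase_perm {m : ℕ} (hm : m + 1 < 2 * n)
    (τ : Equiv.Perm (Fin (m + 1))) :
    (List.ofFn fun k => (staircase hm (τ k) : Matrix (Fin n) (Fin n) R)).prod =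
      if τ = 1 then single ⟨0, by omega⟩ ⟨(m + 1) / 2, by omega⟩ 1 else 0 := by
  simp only [staircase]
  rw [list_prod_ofFn_single_one]
  by_cases hτ : τ = 1
  · subst hτ
    simp
  · rw [if_neg hτ, if_neg]
    intro hchain
    exact hτ (τ.eq_one_of_staircase_chain fun k => congrArg Fin.val (hchain k))

theorem exists_sum_perm_smul_prod_ne_zero {m : ℕ} (hm : m < 2 * n) (c : Equiv.Perm (Fin m) → R)
    (hc : c ≠ 0) : ∃ x : Fin m → Matrix (Fin n) (Fin n) R,
      ∑ σ : Equiv.Perm (Fin m), c σ • (List.ofFn fun i => x (σ i)).prod ≠ 0 := by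
  obtain ⟨σ₀, hσ₀⟩ := Function.ne_iff.mp hc
  cases m with
  | zero =>
    refine ⟨fun _ => 0, fun h => hσ₀ ?_⟩
    rw [Subsingleton.elim σ₀ 1]
    simpa using congrFun₂ h ⟨0, by omega⟩ ⟨0, by omega⟩
  | succ m =>
    refine ⟨fun k => staircase hm (σ₀⁻¹ k), fun h => hσ₀ ?_⟩
    have hprod (σ : Equiv.Perm (Fin (m + 1))) :
        (List.ofFn fun k => (staircase hm (σ₀⁻¹ (σ k)) : Matrix (Fin n) (Fin n) R)).prod =
          if σ₀ = σ then single ⟨0, by omega⟩ ⟨(m + 1) / 2, by omega⟩ 1 else 0 := by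
      simpa only [Equiv.Perm.mul_apply, inv_mul_eq_one] using
        list_prod_ofFn_staircase_perm (R := R) hm (σ₀⁻¹ * σ)
    simp only [hprod, smul_ite, smul_zero, Finset.sum_ite_eq, Finset.mem_univ, if_true] at h
    simpa using congrFun₂ h ⟨0, by omega⟩ ⟨(m + 1) / 2, by omega⟩

end Matrix

/-- `M_n(F)` satisfies no nonzero multilinear polynomial identity of degree `m < 2n`;
in particular the standard polynomial `s_{2n-1}` is not an identity of `M_n(F)`. -/
theorem Mn_no_identity_lt_two_n (F : Type*) [Field F] (n : ℕ) (hn : 0 < n) :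
    (∀ (m : ℕ), m < 2 * n → ∀ c : Equiv.Perm (Fin m) → F, c ≠ 0 →
      ∃ x : Fin m → Matrix (Fin n) (Fin n) F,
        ∑ σ : Equiv.Perm (Fin m), c σ • (List.ofFn fun i => x (σ i)).prod ≠ 0) ∧
    ∃ x : Fin (2 * n - 1) → Matrix (Fin n) (Fin n) F, stdPoly (2 * n - 1) x ≠ 0 := by
  refine ⟨fun m hm c hc => exists_sum_perm_smul_prod_ne_zero hm c hc, ?_⟩
  have hsign : (fun σ : Equiv.Perm (Fin (2 * n - 1)) => ((Equiv.Perm.sign σ : ℤ) : F)) ≠ 0 :=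
    Function.ne_iff.2 ⟨1, by simp⟩
  obtain ⟨x, hx⟩ := exists_sum_perm_smul_prod_ne_zero (by omega : 2 * n - 1 < 2 * n) _ hsign
  exact ⟨x, by simpa only [stdPoly, Int.cast_smul_eq_zsmul] using hx⟩
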